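/- Fix τ > 0 and a real number a. For σ > 0 large enough that 2^{1/3}z − (1 + 2^{−1/3})σ + 2^{−1/3}a ≥ 0 for all z ≥ 2^{2/3}σ, define f_σ(z) := exp( τ(2^{1/3}z − σ) − (2/3)·( 2^{1/3}z − (1 + 2^{−1/3})σ + 2^{−1/3}a )^{3/2} ) for z ≥ 2^{2/3}σ. Then the squared L² norm of f_σ on [2^{2/3}σ, ∞) tends to zero as σ → +∞, i.e. lim_{σ → +∞} ∫_{2^{2/3}σ}^{∞} f_σ(z)² dz = 0. -/

import Mathlib

/-!
Put `s = 2^{1/3} z - σ`, so that `s ≥ σ` on the domain of integration and the base of the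
`3/2`-power is `s - 2^{-1/3}(σ - a)`. Since `2^{-1/3} < 1`, for large `σ` this base is at
least a fixed multiple `m s` of `s`, and then `(2/3)(m s)^{3/2} ≥ (τ + 1) s` because
`s^{1/2} ≥ σ^{1/2}` is large. Hence `f_σ(z) ≤ exp(σ - 2^{1/3} z)`, whose square integrates over
`[2^{2/3} σ, ∞)` to `exp(-2σ) / (2 · 2^{1/3})`.
-/

open MeasureTheory Set Filter

/-- The bounding function
`f_σ(z) = exp( τ(2^{1/3}z − σ) − (2/3)(2^{1/3}z − (1 + 2^{−1/3})σ + 2^{−1/3}a)^{3/2} )`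
dominating the off-diagonal kernel entries of the conditioned tacnode operator. -/
noncomputable def fBound (τ a σ z : ℝ) : ℝ :=
  Real.exp (τ * ((2 : ℝ) ^ ((1 : ℝ) / 3) * z - σ) -
    2 / 3 * ((2 : ℝ) ^ ((1 : ℝ) / 3) * z - (1 + (2 : ℝ) ^ (-(1 : ℝ) / 3)) * σ +
      (2 : ℝ) ^ (-(1 : ℝ) / 3) * a) ^ ((3 : ℝ) / 2))

open Real

theorem eventually_forall_ge_mul_sub_rpow_le_neg (τ b : ℝ) {q : ℝ} (hq₀ : 0 ≤ q) (hq₁ : q < 1) :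
    ∀ᶠ σ in atTop, ∀ s, σ ≤ s → τ * s - 2 / 3 * (s - q * σ + b) ^ ((3 : ℝ) / 2) ≤ -s := by
  obtain ⟨m, hm, hmq⟩ : ∃ m : ℝ, 0 < m ∧ 2 * m = 1 - q := ⟨(1 - q) / 2, by linarith, by ring⟩
  have hgrowth : Tendsto (fun σ : ℝ => 2 / 3 * m ^ ((3 : ℝ) / 2) * σ ^ ((1 : ℝ) / 2)) atTop atTop :=
    (tendsto_rpow_atTop (by norm_num)).const_mul_atTop (by positivity)
  have hlinear : Tendsto (fun σ : ℝ => m * σ) atTop atTop := tendsto_id.const_mul_atTop hm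
  filter_upwards [eventually_gt_atTop 0, hlinear.eventually_ge_atTop |b|,
    hgrowth.eventually_ge_atTop (τ + 1)] with σ hσ hb hτ s hs
  have hs₀ : 0 < s := hσ.trans_le hs
  have hbase : m * s ≤ s - q * σ + b := by
    have : q * σ ≤ q * s := mul_le_mul_of_nonneg_left hs hq₀
    have : m * σ ≤ m * s := mul_le_mul_of_nonneg_left hs hm.le
    have : 2 * m * s = (1 - q) * s := by rw [hmq]
    linarith [neg_abs_le b]
  have hpow : (τ + 1) * s ≤ 2 / 3 * (m * s) ^ ((3 : ℝ) / 2) := calc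
    (τ + 1) * s ≤ 2 / 3 * m ^ ((3 : ℝ) / 2) * σ ^ ((1 : ℝ) / 2) * s :=
      mul_le_mul_of_nonneg_right hτ hs₀.le
    _ ≤ 2 / 3 * m ^ ((3 : ℝ) / 2) * s ^ ((1 : ℝ) / 2) * s := by gcongr
    _ = 2 / 3 * (m * s) ^ ((3 : ℝ) / 2) := by
      rw [mul_rpow hm.le hs₀.le, show (3 : ℝ) / 2 = 1 / 2 + 1 by norm_num, rpow_add hs₀,
        rpow_one]
      ring
  have hbase_pow := rpow_le_rpow (by positivity) hbase (by norm_num : (0 : ℝ) ≤ 3 / 2)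
  linarith

theorem rpow_one_third_mul_rpow_two_thirds {x : ℝ} (hx : 0 ≤ x) :
    x ^ ((1 : ℝ) / 3) * x ^ ((2 : ℝ) / 3) = x := by
  rw [← rpow_add' hx (by norm_num)]
  norm_num

theorem eventually_fBound_le_exp (τ a : ℝ) :
    ∀ᶠ σ in atTop, ∀ z, (2 : ℝ) ^ ((2 : ℝ) / 3) * σ ≤ z →
      fBound τ a σ z ≤ exp (σ - (2 : ℝ) ^ ((1 : ℝ) / 3) * z) := by
  have hq : (2 : ℝ) ^ (-(1 : ℝ) / 3) < 1 := rpow_lt_one_of_one_lt_of_neg one_lt_two (by norm_num)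
  filter_upwards [eventually_forall_ge_mul_sub_rpow_le_neg τ ((2 : ℝ) ^ (-(1 : ℝ) / 3) * a)
    (by positivity) hq] with σ hσ z hz
  have hs : σ ≤ (2 : ℝ) ^ ((1 : ℝ) / 3) * z - σ := by
    have := mul_le_mul_of_nonneg_left hz (by positivity : (0 : ℝ) ≤ 2 ^ ((1 : ℝ) / 3))
    rw [← mul_assoc, rpow_one_third_mul_rpow_two_thirds zero_le_two] at this
    linarith
  rw [fBound, exp_le_exp]
  convert hσ _ hs using 4 <;> ring

theorem exp_sub_mul_sq (σ b z : ℝ) : exp (σ - b * z) ^ 2 = exp (2 * σ) * exp (-(2 * b) * z) := by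
  rw [sq, ← exp_add, ← exp_add]
  congr 1
  ring

theorem integrableOn_exp_sub_mul_sq_Ici {b : ℝ} (hb : 0 < b) (σ c : ℝ) :
    IntegrableOn (fun z => exp (σ - b * z) ^ 2) (Ici c) := by
  simp_rw [exp_sub_mul_sq]
  rw [integrableOn_Ici_iff_integrableOn_Ioi]
  exact (integrableOn_exp_mul_Ioi (by linarith) c).const_mul _

theorem integral_exp_sub_mul_sq_Ici {b : ℝ} (hb : 0 < b) (σ c : ℝ) :
    ∫ z in Ici c, exp (σ - b * z) ^ 2 = exp (2 * (σ - b * c)) / (2 * b) := by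
  simp_rw [exp_sub_mul_sq, integral_Ici_eq_integral_Ioi, integral_const_mul,
    integral_exp_mul_Ioi (by linarith : -(2 * b) < 0)]
  rw [neg_div_neg_eq, mul_div_assoc', ← exp_add]
  congr 2
  ring

theorem fBound_L2_norm_tendsto_zero_general (τ a : ℝ) :
    Tendsto (fun σ : ℝ => ∫ z in Ici ((2 : ℝ) ^ ((2 : ℝ) / 3) * σ), (fBound τ a σ z) ^ 2)
      atTop (nhds 0) := by
  set p : ℝ := (2 : ℝ) ^ ((1 : ℝ) / 3)
  have hp : 0 < p := by positivity
  have hdecay : Tendsto (fun σ : ℝ => exp (-(2 * σ)) / (2 * p)) atTop (nhds 0) := by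
    simpa using (tendsto_exp_neg_atTop_nhds_zero.comp
      (tendsto_id.const_mul_atTop two_pos)).div_const (2 * p)
  refine tendsto_of_tendsto_of_tendsto_of_le_of_le' tendsto_const_nhds hdecay
    (Eventually.of_forall fun σ => setIntegral_nonneg measurableSet_Ici fun z _ => sq_nonneg _) ?_
  filter_upwards [eventually_fBound_le_exp τ a] with σ hσ
  calc ∫ z in Ici ((2 : ℝ) ^ ((2 : ℝ) / 3) * σ), fBound τ a σ z ^ 2
      ≤ ∫ z in Ici ((2 : ℝ) ^ ((2 : ℝ) / 3) * σ), exp (σ - p * z) ^ 2 :=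
        setIntegral_mono_of_nonneg (fun z _ => sq_nonneg _)
          (fun z hz => pow_le_pow_left₀ (exp_pos _).le (hσ z hz) 2)
          (integrableOn_exp_sub_mul_sq_Ici hp σ _)
    _ = exp (-(2 * σ)) / (2 * p) := by
      rw [integral_exp_sub_mul_sq_Ici hp, ← mul_assoc,
        rpow_one_third_mul_rpow_two_thirds zero_le_two]
      congr 2
      ring

/-- For fixed `τ > 0` and `a`, the squared `L²` norm of `f_σ` on `[2^{2/3}σ, ∞)` tends to
zero as `σ → +∞`. -/
theorem fBound_L2_norm_tendsto_zero (τ a : ℝ) (hτ : 0 < τ) :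
    Tendsto (fun σ : ℝ => ∫ z in Ici ((2 : ℝ) ^ ((2 : ℝ) / 3) * σ), (fBound τ a σ z) ^ 2)
      atTop (nhds 0) :=
  fBound_L2_norm_tendsto_zero_general τ a
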